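/- arXiv:1609.01780 — 3 statements merged into one kernel-verified Lean document; each statement's English description precedes it below -/
import Mathlib

section
/- Let $u\in C^\infty(\mathbb{R}^d)$ satisfy the polynomial growth bound $|u(y)|\le A_0|y|^{N_0}$ for all $|y|\ge 2$ (for some $A_0>0$ and integer $N_0\ge 0$), and suppose $u=\psi * u$ for some Schwartz function $\psi$ (corresponding to a frequency cutoff to $\{|\xi|<2\}$). Let $0<r<1$ and suppose the Hardy–Littlewood maximal function $\mathcal{M}(|u|^r)(0)$ is finite. Then $\sup_{x\in\mathbb{R}^d} |u(x)|\,(1+|x|)^{-d/r} < \infty$. -/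
open MeasureTheory Filter
open scoped ENNReal Topology

noncomputable abbrev Ed (d : ℕ) := EuclideanSpace ℝ (Fin d)

/-- The (uncentered-radius, centered) Hardy–Littlewood maximal function, valued in `ℝ≥0∞`:
`M f (x) = sup_{ρ>0} (1/|B_ρ|) ∫_{B(x,ρ)} |f|`. -/
noncomputable def maxFn {d : ℕ} (f : Ed d → ℝ) (x : Ed d) : ℝ≥0∞ :=
  ⨆ (ρ : ℝ) (_ : 0 < ρ),
    (∫⁻ y in Metric.ball x ρ, ENNReal.ofReal |f y| ∂volume) / volume (Metric.ball x ρ)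

set_option maxHeartbeats 1000000 in
/-- If `u` is smooth with polynomial growth `|u(y)| ≤ A₀|y|^{N₀}` for `|y| ≥ 2`,
`u = ψ * u` for a Schwartz function `ψ`, `0 < r < 1`, and `𝓜(|u|^r)(0) < ∞`, then
`sup_x |u(x)| (1+|x|)^{-d/r} < ∞`. -/
theorem stmt3 {d : ℕ} (hd : 1 ≤ d) (u : Ed d → ℂ) (hu : ContDiff ℝ (⊤ : ℕ∞) u)
    (A₀ : ℝ) (hA₀ : 0 < A₀) (N₀ : ℕ)
    (hgrowth : ∀ y : Ed d, 2 ≤ ‖y‖ → ‖u y‖ ≤ A₀ * ‖y‖ ^ N₀)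
    (ψ : SchwartzMap (Ed d) ℂ)
    (hconv : ∀ x, u x = ∫ y : Ed d, ψ (x - y) * u y)
    (r : ℝ) (hr0 : 0 < r) (hr1 : r < 1)
    (hmax : maxFn (fun y => ‖u y‖ ^ r) 0 ≠ ∞) :
    ∃ C : ℝ, ∀ x : Ed d, ‖u x‖ * (1 + ‖x‖) ^ (-(d : ℝ) / r) ≤ C := by
  classical
  have hucont : Continuous u := hu.continuous
  have hNtriv : Nontrivial (Ed d) := by
    apply Module.nontrivial_of_finrank_pos (R := ℝ)
    rw [finrank_euclideanSpace_fin]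
    exact hd
  -- the sup of ‖u‖ over closed balls
  set S : ℝ → ℝ := fun R => sSup ((fun y => ‖u y‖) '' Metric.closedBall (0 : Ed d) R) with hS
  have hbdd : ∀ R : ℝ, BddAbove ((fun y => ‖u y‖) '' Metric.closedBall (0 : Ed d) R) :=
    fun R => (isCompact_closedBall (0 : Ed d) R).bddAbove_image hucont.norm.continuousOn
  have hSle : ∀ R : ℝ, ∀ x : Ed d, ‖x‖ ≤ R → ‖u x‖ ≤ S R := by
    intro R x hx
    exact le_csSup (hbdd R) ⟨x, by simpa [Metric.mem_closedBall, dist_eq_norm] using hx, rfl⟩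
  have hS0 : ∀ R : ℝ, 0 ≤ R → 0 ≤ S R := by
    intro R hR
    exact le_trans (norm_nonneg (u 0)) (hSle R 0 (by simpa using hR))
  set U : ℝ → ℝ := fun R => 1 + S R with hU
  have hU1 : ∀ R : ℝ, 0 ≤ R → 1 ≤ U R := fun R hR => by
    simp only [hU]; linarith [hS0 R hR]
  -- supremum bound for ψ
  obtain ⟨C0, hC0pos, hC0⟩ := ψ.decay 0 0
  have hψ_bound : ∀ z : Ed d, ‖ψ z‖ ≤ C0 := by
    intro z
    have := hC0 z
    simpa [norm_iteratedFDeriv_zero] using this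
  -- decay bound for ψ
  set k : ℕ := N₀ + d + 1 with hk
  obtain ⟨C1, hC1pos, hC1⟩ := ψ.decay k 0
  have hψ_decay : ∀ z : Ed d, ‖z‖ ^ k * ‖ψ z‖ ≤ C1 := by
    intro z
    have := hC1 z
    simpa [norm_iteratedFDeriv_zero] using this
  -- maximal function bound
  set M : ℝ≥0∞ := maxFn (fun y => ‖u y‖ ^ r) 0 with hMdef
  have hball : ∀ ρ : ℝ, 0 < ρ →
      (∫⁻ y in Metric.ball (0 : Ed d) ρ, ENNReal.ofReal (‖u y‖ ^ r) ∂volume)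
        ≤ M * volume (Metric.ball (0 : Ed d) ρ) := by
    intro ρ hρ
    have h1 : (∫⁻ y in Metric.ball (0 : Ed d) ρ, ENNReal.ofReal (|‖u y‖ ^ r|) ∂volume)
        / volume (Metric.ball (0 : Ed d) ρ) ≤ M := by
      rw [hMdef, maxFn]
      exact le_iSup₂ (f := fun (ρ : ℝ) (_ : 0 < ρ) =>
        (∫⁻ y in Metric.ball (0 : Ed d) ρ,
          ENNReal.ofReal (|‖u y‖ ^ r|) ∂volume) / volume (Metric.ball (0 : Ed d) ρ)) ρ hρ
    have habs : ∀ y : Ed d, |‖u y‖ ^ r| = ‖u y‖ ^ r := fun y =>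
      abs_of_nonneg (Real.rpow_nonneg (norm_nonneg _) r)
    simp only [habs] at h1
    have hvol0 : volume (Metric.ball (0 : Ed d) ρ) ≠ 0 :=
      (Metric.measure_ball_pos volume 0 hρ).ne'
    rwa [ENNReal.div_le_iff_le_mul (Or.inl hvol0) (Or.inl measure_ball_lt_top.ne)] at h1
  set Mr : ℝ := M.toReal with hMr
  have hMR : M = ENNReal.ofReal Mr := (ENNReal.ofReal_toReal hmax).symm
  have hMr0 : 0 ≤ Mr := ENNReal.toReal_nonneg
  -- volume of unit ball
  set v : ℝ := (volume (Metric.ball (0 : Ed d) 1)).toReal with hv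
  have hv0 : 0 ≤ v := ENNReal.toReal_nonneg
  have hvol_ball : ∀ ρ : ℝ, 0 ≤ ρ →
      volume (Metric.ball (0 : Ed d) ρ) = ENNReal.ofReal (ρ ^ d * v) := by
    intro ρ hρ
    rw [Measure.addHaar_ball volume 0 hρ, finrank_euclideanSpace_fin]
    rw [ENNReal.ofReal_mul (by positivity), hv,
      ENNReal.ofReal_toReal measure_ball_lt_top.ne]
  -- integrability of the Japanese bracket
  have hdlt : (Module.finrank ℝ (Ed d) : ℝ) < (d : ℝ) + 1 := by
    rw [finrank_euclideanSpace_fin]; linarith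
  have hint : Integrable (fun y : Ed d => (1 + ‖y‖) ^ (-((d : ℝ) + 1))) volume :=
    integrable_one_add_norm hdlt
  set Itop : ℝ≥0∞ := ∫⁻ y : Ed d, ENNReal.ofReal ((1 + ‖y‖) ^ (-((d : ℝ) + 1))) ∂volume
    with hItop
  have hItop_lt : Itop < ∞ := by
    have h := hint.2
    rw [hasFiniteIntegral_iff_ofReal] at h
    · exact h
    · exact Filter.Eventually.of_forall fun y => Real.rpow_nonneg (by positivity) _
  set I2 : ℝ := Itop.toReal with hI2
  have hI20 : 0 ≤ I2 := ENNReal.toReal_nonneg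
  have hItop_eq : Itop = ENNReal.ofReal I2 := (ENNReal.ofReal_toReal hItop_lt.ne).symm
  -- constants
  set C2 : ℝ := C1 * 2 ^ k * A₀ with hC2
  have hC20 : 0 < C2 := by positivity
  set C3 : ℝ := C2 * 2 ^ (d + 1) with hC3
  have hC30 : 0 < C3 := by positivity
  set B₁ : ℝ := C0 * (3 ^ d * v) * Mr with hB₁
  have hB₁0 : 0 ≤ B₁ := by positivity
  set B : ℝ := B₁ + C3 * I2 + 2 with hB
  have hB1 : 1 ≤ B := by nlinarith [mul_nonneg hC30.le hI20]
  -- KEY STEP: U R ≤ B * R^d * (U (2R))^(1-r) for R ≥ 2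
  have key : ∀ R : ℝ, 2 ≤ R → U R ≤ B * R ^ d * (U (2 * R)) ^ (1 - r) := by
    intro R hR
    have hRpos : (0 : ℝ) < R := by linarith
    have hU2R : 1 ≤ U (2 * R) := hU1 _ (by linarith)
    have hUpow : (1 : ℝ) ≤ (U (2 * R)) ^ (1 - r) := by
      calc (1 : ℝ) = 1 ^ (1 - r) := (Real.one_rpow _).symm
      _ ≤ (U (2 * R)) ^ (1 - r) :=
        Real.rpow_le_rpow zero_le_one hU2R (by linarith)
    have hUpow0 : (0 : ℝ) < (U (2 * R)) ^ (1 - r) := by linarith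
    have hRd1 : (1 : ℝ) ≤ R ^ d := one_le_pow₀ (by linarith)
    -- pointwise bound for each x in the ball of radius R
    have hxbound : ∀ x : Ed d, ‖x‖ ≤ R →
        ‖u x‖ ≤ (B₁ + C3 * I2) * (R ^ d * (U (2 * R)) ^ (1 - r)) := by
      intro x hx
      -- Step A: norm of the integral vs lintegral
      have hA : ‖u x‖ ≤ (∫⁻ y : Ed d,
          ENNReal.ofReal (‖ψ (x - y)‖ * ‖u y‖) ∂volume).toReal := by
        rw [hconv x]
        have h := MeasureTheory.norm_integral_le_lintegral_norm
          (μ := (volume : Measure (Ed d))) (fun y => ψ (x - y) * u y)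
        simpa [norm_mul] using h
      -- split integral
      have hsplit : (∫⁻ y : Ed d, ENNReal.ofReal (‖ψ (x - y)‖ * ‖u y‖) ∂volume)
          = (∫⁻ y in Metric.closedBall (0 : Ed d) (2 * R), ENNReal.ofReal (‖ψ (x - y)‖ * ‖u y‖) ∂volume)
            + (∫⁻ y in (Metric.closedBall (0 : Ed d) (2 * R))ᶜ, ENNReal.ofReal (‖ψ (x - y)‖ * ‖u y‖) ∂volume) :=
        (lintegral_add_compl _ measurableSet_closedBall).symm
      -- inner estimate
      have hinner : (∫⁻ y in Metric.closedBall (0 : Ed d) (2 * R), ENNReal.ofReal (‖ψ (x - y)‖ * ‖u y‖) ∂volume)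
          ≤ ENNReal.ofReal (B₁ * (R ^ d * (U (2 * R)) ^ (1 - r))) := by
        have hpt : ∀ y ∈ Metric.closedBall (0 : Ed d) (2 * R), ENNReal.ofReal (‖ψ (x - y)‖ * ‖u y‖)
            ≤ ENNReal.ofReal (C0 * (U (2 * R)) ^ (1 - r)) * ENNReal.ofReal (‖u y‖ ^ r) := by
          intro y hy
          rw [← ENNReal.ofReal_mul (by positivity)]
          apply ENNReal.ofReal_le_ofReal
          have huy : ‖u y‖ ≤ U (2 * R) := by
            have hy2 : ‖y‖ ≤ 2 * R := by
              simpa [Metric.mem_closedBall, dist_eq_norm] using hy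
            have h := hSle (2 * R) y hy2
            simp only [hU]; linarith
          by_cases h0 : ‖u y‖ = 0
          · rw [h0, mul_zero]
            positivity
          · have hpos : 0 < ‖u y‖ := lt_of_le_of_ne (norm_nonneg _) (Ne.symm h0)
            have hsplit2 : ‖u y‖ = ‖u y‖ ^ (1 - r) * ‖u y‖ ^ r := by
              rw [← Real.rpow_add hpos]
              simp
            calc ‖ψ (x - y)‖ * ‖u y‖ ≤ C0 * ‖u y‖ :=
                mul_le_mul_of_nonneg_right (hψ_bound _) (norm_nonneg _)
            _ = C0 * (‖u y‖ ^ (1 - r) * ‖u y‖ ^ r) := by rw [← hsplit2]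
            _ ≤ C0 * ((U (2 * R)) ^ (1 - r) * ‖u y‖ ^ r) := by
                apply mul_le_mul_of_nonneg_left _ hC0pos.le
                apply mul_le_mul_of_nonneg_right _ (Real.rpow_nonneg (norm_nonneg _) r)
                exact Real.rpow_le_rpow (norm_nonneg _) huy (by linarith)
            _ = C0 * (U (2 * R)) ^ (1 - r) * ‖u y‖ ^ r := by ring
        calc (∫⁻ y in Metric.closedBall (0 : Ed d) (2 * R), ENNReal.ofReal (‖ψ (x - y)‖ * ‖u y‖) ∂volume)
            ≤ ∫⁻ y in Metric.closedBall (0 : Ed d) (2 * R), ENNReal.ofReal (C0 * (U (2 * R)) ^ (1 - r))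
                * ENNReal.ofReal (‖u y‖ ^ r) ∂volume :=
              setLIntegral_mono' measurableSet_closedBall hpt
        _ = ENNReal.ofReal (C0 * (U (2 * R)) ^ (1 - r))
              * ∫⁻ y in Metric.closedBall (0 : Ed d) (2 * R), ENNReal.ofReal (‖u y‖ ^ r) ∂volume :=
            lintegral_const_mul' _ _ ENNReal.ofReal_ne_top
        _ ≤ ENNReal.ofReal (C0 * (U (2 * R)) ^ (1 - r))
              * ∫⁻ y in Metric.ball (0 : Ed d) (3 * R), ENNReal.ofReal (‖u y‖ ^ r) ∂volume := by
            apply mul_le_mul_right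
            exact lintegral_mono_set (Metric.closedBall_subset_ball (by linarith))
        _ ≤ ENNReal.ofReal (C0 * (U (2 * R)) ^ (1 - r))
              * (M * volume (Metric.ball (0 : Ed d) (3 * R))) :=
            mul_le_mul_right (hball (3 * R) (by linarith)) _
        _ = ENNReal.ofReal (B₁ * (R ^ d * (U (2 * R)) ^ (1 - r))) := by
            rw [hvol_ball (3 * R) (by linarith), hMR,
              ← ENNReal.ofReal_mul hMr0, ← ENNReal.ofReal_mul (by positivity)]
            congr 1
            rw [hB₁, mul_pow]
            ring
      -- outer estimate
      have houter : (∫⁻ y in (Metric.closedBall (0 : Ed d) (2 * R))ᶜ, ENNReal.ofReal (‖ψ (x - y)‖ * ‖u y‖) ∂volume)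
          ≤ ENNReal.ofReal (C3 * I2) := by
        have hpt : ∀ y ∈ (Metric.closedBall (0 : Ed d) (2 * R))ᶜ, ENNReal.ofReal (‖ψ (x - y)‖ * ‖u y‖)
            ≤ ENNReal.ofReal (C3 * (1 + ‖y‖) ^ (-((d : ℝ) + 1))) := by
          intro y hy
          apply ENNReal.ofReal_le_ofReal
          have hy' : 2 * R < ‖y‖ := by
            simp only [Set.mem_compl_iff, Metric.mem_closedBall, dist_eq_norm,
              not_le, sub_zero] at hy
            simpa using hy
          have hy2 : (2 : ℝ) ≤ ‖y‖ := by linarith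
          have hy1 : (1 : ℝ) ≤ ‖y‖ := by linarith
          have hypos : (0 : ℝ) < ‖y‖ := by linarith
          have hxy : ‖y‖ / 2 ≤ ‖x - y‖ := by
            have h2 : ‖y‖ - ‖x‖ ≤ ‖y - x‖ := norm_sub_norm_le y x
            rw [norm_sub_rev] at h2
            linarith
          -- ψ decay
          have hψy : ‖ψ (x - y)‖ ≤ C1 * 2 ^ k / ‖y‖ ^ k := by
            have h1 : ‖x - y‖ ^ k * ‖ψ (x - y)‖ ≤ C1 := hψ_decay _
            have h2 : (‖y‖ / 2) ^ k ≤ ‖x - y‖ ^ k :=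
              pow_le_pow_left₀ (by positivity) hxy k
            have h3 : (‖y‖ / 2) ^ k * ‖ψ (x - y)‖ ≤ C1 :=
              le_trans (mul_le_mul_of_nonneg_right h2 (norm_nonneg _)) h1
            rw [div_pow, div_mul_eq_mul_div, div_le_iff₀ (by positivity)] at h3
            rw [le_div_iff₀ (by positivity), mul_comm]
            exact h3
          have huy : ‖u y‖ ≤ A₀ * ‖y‖ ^ N₀ := hgrowth y hy2
          have step1 : ‖ψ (x - y)‖ * ‖u y‖ ≤ C2 / ‖y‖ ^ (d + 1) := by
            calc ‖ψ (x - y)‖ * ‖u y‖ ≤ (C1 * 2 ^ k / ‖y‖ ^ k) * (A₀ * ‖y‖ ^ N₀) :=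
                mul_le_mul hψy huy (norm_nonneg _) (by positivity)
            _ = C2 / ‖y‖ ^ (d + 1) := by
                have hyk : ‖y‖ ^ k = ‖y‖ ^ N₀ * ‖y‖ ^ (d + 1) := by
                  rw [hk, add_assoc, pow_add]
                have hyne : (‖y‖ : ℝ) ≠ 0 := by positivity
                rw [hC2, hyk]
                field_simp
          have step2 : C2 / ‖y‖ ^ (d + 1) ≤ C3 * (1 + ‖y‖) ^ (-((d : ℝ) + 1)) := by
            have h1y : 1 + ‖y‖ ≤ 2 * ‖y‖ := by linarith
            have hpow : (1 + ‖y‖ : ℝ) ^ (d + 1) ≤ 2 ^ (d + 1) * ‖y‖ ^ (d + 1) := by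
              calc (1 + ‖y‖ : ℝ) ^ (d + 1) ≤ (2 * ‖y‖) ^ (d + 1) :=
                  pow_le_pow_left₀ (by positivity) h1y _
              _ = 2 ^ (d + 1) * ‖y‖ ^ (d + 1) := mul_pow _ _ _
            have hcast : -((d : ℝ) + 1) = -(((d + 1 : ℕ) : ℝ)) := by push_cast; ring
            rw [hcast, Real.rpow_neg (by positivity), Real.rpow_natCast, hC3,
              ← div_eq_mul_inv]
            rw [div_le_div_iff₀ (by positivity) (by positivity)]
            calc C2 * (1 + ‖y‖) ^ (d + 1) ≤ C2 * (2 ^ (d + 1) * ‖y‖ ^ (d + 1)) :=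
                mul_le_mul_of_nonneg_left hpow hC20.le
            _ = C2 * 2 ^ (d + 1) * ‖y‖ ^ (d + 1) := by ring
          linarith
        calc (∫⁻ y in (Metric.closedBall (0 : Ed d) (2 * R))ᶜ, ENNReal.ofReal (‖ψ (x - y)‖ * ‖u y‖) ∂volume)
            ≤ ∫⁻ y in (Metric.closedBall (0 : Ed d) (2 * R))ᶜ, ENNReal.ofReal (C3 * (1 + ‖y‖) ^ (-((d : ℝ) + 1))) ∂volume :=
              setLIntegral_mono' measurableSet_closedBall.compl hpt
        _ ≤ ∫⁻ y : Ed d, ENNReal.ofReal (C3 * (1 + ‖y‖) ^ (-((d : ℝ) + 1))) ∂volume :=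
            (lintegral_mono_set (Set.subset_univ _)).trans_eq (by rw [Measure.restrict_univ])
        _ = ENNReal.ofReal C3 * Itop := by
            rw [hItop, ← lintegral_const_mul' _ _ ENNReal.ofReal_ne_top]
            congr 1
            funext y
            rw [← ENNReal.ofReal_mul hC30.le]
        _ = ENNReal.ofReal (C3 * I2) := by
            rw [hItop_eq, ← ENNReal.ofReal_mul hC30.le]
      -- combine
      have htotal : (∫⁻ y : Ed d, ENNReal.ofReal (‖ψ (x - y)‖ * ‖u y‖) ∂volume)
          ≤ ENNReal.ofReal (B₁ * (R ^ d * (U (2 * R)) ^ (1 - r)) + C3 * I2) := by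
        rw [hsplit, ENNReal.ofReal_add (by positivity) (by positivity)]
        exact add_le_add hinner houter
      have htoReal : (∫⁻ y : Ed d, ENNReal.ofReal (‖ψ (x - y)‖ * ‖u y‖) ∂volume).toReal
          ≤ B₁ * (R ^ d * (U (2 * R)) ^ (1 - r)) + C3 * I2 := by
        have h := ENNReal.toReal_mono ENNReal.ofReal_ne_top htotal
        rwa [ENNReal.toReal_ofReal (by positivity)] at h
      have hprod : (1 : ℝ) ≤ R ^ d * (U (2 * R)) ^ (1 - r) :=
        hRd1.trans (le_mul_of_one_le_right (by linarith) hUpow)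
      have hCI : C3 * I2 ≤ C3 * I2 * (R ^ d * (U (2 * R)) ^ (1 - r)) :=
        le_mul_of_one_le_right (by positivity) hprod
      calc ‖u x‖ ≤ B₁ * (R ^ d * (U (2 * R)) ^ (1 - r)) + C3 * I2 := hA.trans htoReal
      _ ≤ B₁ * (R ^ d * (U (2 * R)) ^ (1 - r))
            + C3 * I2 * (R ^ d * (U (2 * R)) ^ (1 - r)) := by linarith
      _ = (B₁ + C3 * I2) * (R ^ d * (U (2 * R)) ^ (1 - r)) := by ring
    -- conclude: S R and then U R
    have hSR : S R ≤ (B₁ + C3 * I2) * (R ^ d * (U (2 * R)) ^ (1 - r)) := by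
      apply Real.sSup_le
      · rintro z ⟨y, hy, rfl⟩
        simp only [Metric.mem_closedBall, dist_eq_norm, sub_zero] at hy
        exact hxbound y hy
      · positivity
    have hprod : (1 : ℝ) ≤ R ^ d * (U (2 * R)) ^ (1 - r) :=
      hRd1.trans (le_mul_of_one_le_right (by linarith) hUpow)
    have hUR : U R ≤ (B₁ + C3 * I2 + 2) * (R ^ d * (U (2 * R)) ^ (1 - r)) := by
      have h1 : U R = 1 + S R := rfl
      calc U R = 1 + S R := rfl
      _ ≤ 1 + (B₁ + C3 * I2) * (R ^ d * (U (2 * R)) ^ (1 - r)) := by linarith [hSR]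
      _ ≤ 2 * (R ^ d * (U (2 * R)) ^ (1 - r))
            + (B₁ + C3 * I2) * (R ^ d * (U (2 * R)) ^ (1 - r)) := by linarith [hprod]
      _ = (B₁ + C3 * I2 + 2) * (R ^ d * (U (2 * R)) ^ (1 - r)) := by ring
    calc U R ≤ (B₁ + C3 * I2 + 2) * (R ^ d * (U (2 * R)) ^ (1 - r)) := hUR
    _ = B * R ^ d * (U (2 * R)) ^ (1 - r) := by rw [hB]; ring
  -- a priori polynomial bound
  set A : ℝ := 1 + A₀ + S 2 with hAdef
  have hA1 : 1 ≤ A := by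
    have := hS0 2 (by norm_num)
    simp only [hAdef]; linarith
  have hapriori : ∀ R : ℝ, 2 ≤ R → U R ≤ A * R ^ N₀ := by
    intro R hR
    have hS2 := hS0 2 (by norm_num)
    have hRN : (1 : ℝ) ≤ R ^ N₀ := one_le_pow₀ (by linarith)
    have hSR : S R ≤ A₀ * R ^ N₀ + S 2 := by
      apply Real.sSup_le
      · rintro z ⟨y, hy, rfl⟩
        simp only [Metric.mem_closedBall, dist_eq_norm, sub_zero] at hy
        by_cases h2 : 2 ≤ ‖y‖
        · have h3 : ‖u y‖ ≤ A₀ * R ^ N₀ := le_trans (hgrowth y h2)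
            (mul_le_mul_of_nonneg_left (pow_le_pow_left₀ (norm_nonneg _) hy _) hA₀.le)
          linarith
        · push_neg at h2
          have h3 := hSle 2 y h2.le
          have h4 : (0 : ℝ) ≤ A₀ * R ^ N₀ := by positivity
          linarith
      · have : (0 : ℝ) ≤ A₀ * R ^ N₀ := by positivity
        linarith
    simp only [hU, hAdef]
    nlinarith [mul_nonneg (add_nonneg zero_le_one hS2) (sub_nonneg.2 hRN)]
  -- logarithmic iteration
  set L : ℝ → ℝ := fun R => Real.log (U R) with hL
  have hUpos : ∀ R : ℝ, 0 ≤ R → 0 < U R := fun R h => lt_of_lt_of_le one_pos (hU1 R h)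
  have hstep : ∀ R : ℝ, 2 ≤ R →
      L R ≤ Real.log B + d * Real.log R + (1 - r) * L (2 * R) := by
    intro R hR
    have hRpos : (0 : ℝ) < R := by linarith
    have hU2pos : (0 : ℝ) < U (2 * R) := hUpos _ (by linarith)
    have h1 : L R ≤ Real.log (B * R ^ d * (U (2 * R)) ^ (1 - r)) :=
      Real.log_le_log (hUpos R (by linarith)) (key R hR)
    rw [Real.log_mul (by positivity) (by positivity),
      Real.log_mul (by positivity) (by positivity),
      Real.log_pow, Real.log_rpow hU2pos] at h1
    simp only [hL]
    linarith
  set e : ℝ := (d : ℝ) / r with he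
  have he0 : 0 ≤ e := by positivity
  have hlogB : 0 ≤ Real.log B := Real.log_nonneg hB1
  have hlog2 : 0 ≤ Real.log 2 := Real.log_nonneg one_le_two
  set c : ℝ := (Real.log B + e * Real.log 2) / r with hc
  have hc0 : 0 ≤ c := by positivity
  have hrc : r * c = Real.log B + e * Real.log 2 := by
    rw [hc]; field_simp
  have hre : r * e = (d : ℝ) := by
    rw [he]; field_simp
  have claim : ∀ m : ℕ, ∀ R : ℝ, 2 ≤ R →
      L R ≤ c + e * Real.log R
        + (1 - r) ^ m * (Real.log A + (N₀ : ℝ) * (m * Real.log 2 + Real.log R)) := by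
    intro m
    induction m with
    | zero =>
      intro R hR
      have hlogR : 0 ≤ Real.log R := Real.log_nonneg (by linarith)
      have h1 : L R ≤ Real.log A + (N₀ : ℝ) * Real.log R := by
        have h2 : L R ≤ Real.log (A * R ^ N₀) :=
          Real.log_le_log (hUpos R (by linarith)) (hapriori R hR)
        rw [Real.log_mul (by linarith) (by positivity), Real.log_pow] at h2
        exact h2
      simp only [pow_zero, Nat.cast_zero, zero_mul, zero_add, one_mul]
      nlinarith [mul_nonneg he0 hlogR]
    | succ m ih =>
      intro R hR
      have hR2 : (2 : ℝ) ≤ 2 * R := by linarith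
      have hRpos : (0 : ℝ) < R := by linarith
      have hlogR : 0 ≤ Real.log R := Real.log_nonneg (by linarith)
      have h1 := hstep R hR
      have h2 := ih (2 * R) hR2
      rw [Real.log_mul two_ne_zero (by linarith)] at h2
      have h3 : (1 - r) * L (2 * R) ≤ (1 - r) * (c + e * (Real.log 2 + Real.log R)
          + (1 - r) ^ m * (Real.log A
            + (N₀ : ℝ) * ((m : ℝ) * Real.log 2 + (Real.log 2 + Real.log R)))) :=
        mul_le_mul_of_nonneg_left h2 (by linarith)
      have htail : (1 - r) ^ (m + 1)
            * (Real.log A + (N₀ : ℝ) * (((m : ℝ) + 1) * Real.log 2 + Real.log R))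
          = (1 - r) * ((1 - r) ^ m * (Real.log A
            + (N₀ : ℝ) * ((m : ℝ) * Real.log 2 + (Real.log 2 + Real.log R)))) := by
        ring
      push_cast
      rw [htail]
      have h4 : r * e * Real.log R = (d : ℝ) * Real.log R := by rw [hre]
      nlinarith [mul_nonneg (mul_nonneg hr0.le he0) hlog2]
  have hlim : ∀ R : ℝ, 2 ≤ R → L R ≤ c + e * Real.log R := by
    intro R hR
    have t1 : Tendsto (fun m : ℕ => (1 - r) ^ m) atTop (𝓝 0) :=
      tendsto_pow_atTop_nhds_zero_of_lt_one (by linarith) (by linarith)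
    have t2 : Tendsto (fun m : ℕ => (m : ℝ) * (1 - r) ^ m) atTop (𝓝 0) :=
      tendsto_self_mul_const_pow_of_lt_one (by linarith) (by linarith)
    have t3 : Tendsto (fun m : ℕ => (1 - r) ^ m
        * (Real.log A + (N₀ : ℝ) * ((m : ℝ) * Real.log 2 + Real.log R))) atTop (𝓝 0) := by
      have heq : ∀ m : ℕ, (1 - r) ^ m
            * (Real.log A + (N₀ : ℝ) * ((m : ℝ) * Real.log 2 + Real.log R))
          = (Real.log A + (N₀ : ℝ) * Real.log R) * (1 - r) ^ m
            + ((N₀ : ℝ) * Real.log 2) * ((m : ℝ) * (1 - r) ^ m) := by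
        intro m; ring
      have ht := (t1.const_mul (Real.log A + (N₀ : ℝ) * Real.log R)).add
        (t2.const_mul ((N₀ : ℝ) * Real.log 2))
      simp only [mul_zero, add_zero] at ht
      exact ht.congr fun m => (heq m).symm
    have htend : Tendsto (fun m : ℕ => c + e * Real.log R
        + (1 - r) ^ m * (Real.log A + (N₀ : ℝ) * ((m : ℝ) * Real.log 2 + Real.log R)))
        atTop (𝓝 (c + e * Real.log R)) := by
      have h0 : Tendsto (fun _ : ℕ => c + e * Real.log R) atTop
          (𝓝 (c + e * Real.log R)) := tendsto_const_nhds
      simpa using h0.add t3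
    exact ge_of_tendsto' htend fun m => claim m R hR
  -- conclusion
  refine ⟨Real.exp c * 2 ^ e, ?_⟩
  intro x
  set R : ℝ := 2 + ‖x‖ with hRdef
  have hR : 2 ≤ R := by
    simp only [hRdef]; linarith [norm_nonneg x]
  have hRpos : (0 : ℝ) < R := by linarith
  have hUR : U R ≤ Real.exp c * R ^ e := by
    have h1 : L R ≤ c + e * Real.log R := hlim R hR
    have h2 : U R = Real.exp (L R) := (Real.exp_log (hUpos R (by linarith))).symm
    rw [h2]
    calc Real.exp (L R) ≤ Real.exp (c + e * Real.log R) := Real.exp_le_exp.2 h1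
    _ = Real.exp c * R ^ e := by
        rw [Real.exp_add, Real.rpow_def_of_pos hRpos, mul_comm e (Real.log R)]
  have hux : ‖u x‖ ≤ U R := by
    have h := hSle R x (by simp only [hRdef]; linarith)
    simp only [hU]; linarith
  have hRle : R ≤ 2 * (1 + ‖x‖) := by
    simp only [hRdef]; linarith [norm_nonneg x]
  have hRe : R ^ e ≤ 2 ^ e * (1 + ‖x‖) ^ e := by
    calc R ^ e ≤ (2 * (1 + ‖x‖)) ^ e := Real.rpow_le_rpow (by linarith) hRle he0
    _ = 2 ^ e * (1 + ‖x‖) ^ e := Real.mul_rpow (by norm_num) (by positivity)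
  have hx1pos : (0 : ℝ) < (1 + ‖x‖) ^ e := Real.rpow_pos_of_pos (by positivity) e
  have hneg : -(d : ℝ) / r = -e := by rw [he]; ring
  rw [hneg, Real.rpow_neg (by positivity), mul_inv_le_iff₀ hx1pos]
  calc ‖u x‖ ≤ U R := hux
  _ ≤ Real.exp c * R ^ e := hUR
  _ ≤ Real.exp c * (2 ^ e * (1 + ‖x‖) ^ e) :=
      mul_le_mul_of_nonneg_left hRe (Real.exp_nonneg c)
  _ = Real.exp c * 2 ^ e * (1 + ‖x‖) ^ e := by ring
end

section
/- Let $B\ge 2$, $0<r<1$, $d\ge 1$, and let $U:[2,\infty)\to[1,\infty)$ satisfy $U(R)\le B\,R^d\,U(2R)^{1-r}$ for all $R\ge 2$, together with an a priori polynomial bound $U(R)\le A_0 R^{N_0}$ for all $R\ge 2$ (some $A_0>0$, integer $N_0\ge 0$). Then there is a constant $A$ (depending on $B,r,d,A_0,N_0$) such that $U(R)\le A\,R^{d/r}$ for all $R\ge 2$. -/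
/-!
Normalise by the expected growth: since `d + (1 - r) (d / r) = d / r`, the function
`L R = log U(R) - (d / r) log R` satisfies `L R ≤ c + (1 - r) L(2R)` with a constant `c`
independent of `R`. Iterating along `R, 2R, 4R, …` gives
`L R ≤ c (1 + θ + ⋯ + θ^(k-1)) + θ^k L(2^k R)` with `θ = 1 - r`, and the a priori polynomial
bound makes `L(2^k R)` grow at most linearly in `k`, so the last term tends to `0`.
Hence `L R ≤ c / r`, i.e. `U(R) ≤ exp(c / r) R^(d/r)`.
-/

open Real Filter Topology Finset

theorem le_div_one_sub_of_le_add_mul_succ {g : ℕ → ℝ} {c θ a b : ℝ} (hθ0 : 0 ≤ θ) (hθ1 : θ < 1)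
    (hstep : ∀ k, g k ≤ c + θ * g (k + 1)) (hgrowth : ∀ k, g k ≤ a + b * k) :
    g 0 ≤ c / (1 - θ) := by
  have iterate : ∀ k, g 0 ≤ c * ∑ i ∈ range k, θ ^ i + θ ^ k * g k := by
    intro k
    induction k with
    | zero => simp
    | succ k ih =>
      calc g 0 ≤ c * ∑ i ∈ range k, θ ^ i + θ ^ k * (c + θ * g (k + 1)) :=
            ih.trans (by gcongr; exact hstep k)
        _ = c * ∑ i ∈ range (k + 1), θ ^ i + θ ^ (k + 1) * g (k + 1) := by
            rw [sum_range_succ]; ring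
  have hlim : Tendsto (fun k : ℕ => c * ∑ i ∈ range k, θ ^ i + (a * θ ^ k + b * (k * θ ^ k)))
      atTop (𝓝 (c * (1 - θ)⁻¹ + (a * 0 + b * 0))) :=
    ((hasSum_geometric_of_lt_one hθ0 hθ1).tendsto_sum_nat.const_mul c).add
      (((tendsto_pow_atTop_nhds_zero_of_lt_one hθ0 hθ1).const_mul a).add
        ((tendsto_self_mul_const_pow_of_lt_one hθ0 hθ1).const_mul b))
  rw [div_eq_mul_inv]
  simp only [mul_zero, add_zero] at hlim
  refine ge_of_tendsto' hlim fun k => (iterate k).trans ?_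
  calc c * ∑ i ∈ range k, θ ^ i + θ ^ k * g k
      ≤ c * ∑ i ∈ range k, θ ^ i + θ ^ k * (a + b * k) := by gcongr; exact hgrowth k
    _ = _ := by ring

theorem le_div_one_sub_of_le_add_mul_comp_mul {L : ℝ → ℝ} {q x₀ c θ a b : ℝ} (hq : 1 ≤ q)
    (hx₀ : 0 < x₀) (hθ0 : 0 ≤ θ) (hθ1 : θ < 1) (hstep : ∀ x, x₀ ≤ x → L x ≤ c + θ * L (q * x))
    (hgrowth : ∀ x, x₀ ≤ x → L x ≤ a + b * log x) {x : ℝ} (hx : x₀ ≤ x) :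
    L x ≤ c / (1 - θ) := by
  have hqx : ∀ k : ℕ, x₀ ≤ q ^ k * x := fun k =>
    hx.trans (le_mul_of_one_le_left (hx₀.le.trans hx) (one_le_pow₀ hq))
  simpa using le_div_one_sub_of_le_add_mul_succ (g := fun k => L (q ^ k * x))
    (a := a + b * log x) (b := b * log q) hθ0 hθ1
    (fun k => by rw [pow_succ', mul_assoc]; exact hstep _ (hqx k))
    (fun k => by
      have := hgrowth _ (hqx k)
      rw [log_mul (by positivity) (by linarith), log_pow] at this
      linarith)

theorem log_le_of_le_mul_rpow_mul_rpow {u v B R d θ : ℝ} (hu : 0 < u) (hv : 0 < v) (hB : 0 < B)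
    (hR : 0 < R) (h : u ≤ B * R ^ d * v ^ θ) : log u ≤ log B + d * log R + θ * log v := by
  have := log_le_log hu h
  rwa [log_mul (by positivity) (by positivity), log_mul (by positivity) (by positivity),
    log_rpow hR, log_rpow hv] at this

theorem log_le_of_le_mul_rpow {u A R N : ℝ} (hu : 0 < u) (hA : 0 < A) (hR : 0 < R)
    (h : u ≤ A * R ^ N) : log u ≤ log A + N * log R := by
  have := log_le_log hu h
  rwa [log_mul hA.ne' (by positivity), log_rpow hR] at this

theorem stmt4_general (B r : ℝ) (d : ℕ) (hB : 2 ≤ B) (hr0 : 0 < r) (hr1 : r < 1)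
    (A₀ : ℝ) (hA₀ : 0 < A₀) (N₀ : ℕ)
    (U : ℝ → ℝ) (hU1 : ∀ R, 2 ≤ R → 1 ≤ U R)
    (hUrec : ∀ R, 2 ≤ R → U R ≤ B * R ^ (d : ℝ) * U (2 * R) ^ (1 - r))
    (hUpoly : ∀ R, 2 ≤ R → U R ≤ A₀ * R ^ (N₀ : ℝ)) :
    ∃ A : ℝ, ∀ R, 2 ≤ R → U R ≤ A * R ^ ((d : ℝ) / r) := by
  have hUpos : ∀ R, 2 ≤ R → 0 < U R := fun R hR => one_pos.trans_le (hU1 R hR)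
  obtain ⟨s, hs, hrs⟩ : ∃ s : ℝ, s = d / r ∧ r * s = d := ⟨_, rfl, mul_div_cancel₀ _ hr0.ne'⟩
  set c : ℝ := log B + (1 - r) * s * log 2
  have key : ∀ R, 2 ≤ R → log (U R) - s * log R ≤ c / (1 - (1 - r)) := fun R hR =>
    le_div_one_sub_of_le_add_mul_comp_mul (L := fun R => log (U R) - s * log R) (θ := 1 - r)
      (a := log A₀) (b := N₀ - s) one_le_two two_pos (by linarith) (by linarith)
      (fun R hR => by
        rw [log_mul two_ne_zero (by linarith)]
        linear_combination - log R * hrs + log_le_of_le_mul_rpow_mul_rpow (hUpos R hR)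
          (hUpos _ (by linarith)) (by linarith) (by linarith) (hUrec R hR))
      (fun R hR => by
        linear_combination log_le_of_le_mul_rpow (hUpos R hR) hA₀ (by linarith) (hUpoly R hR)) hR
  refine ⟨exp (c / r), fun R hR => ?_⟩
  have hL : log (U R) ≤ c / r + s * log R := by
    have := key R hR
    rw [sub_sub_cancel] at this
    linarith
  calc U R = exp (log (U R)) := (exp_log (hUpos R hR)).symm
    _ ≤ exp (c / r + s * log R) := exp_le_exp.mpr hL
    _ = exp (c / r) * R ^ ((d : ℝ) / r) := by
      rw [exp_add, rpow_def_of_pos (by linarith), hs, mul_comm (log R)]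

/-- iteration lemma. If `U : [2,∞) → [1,∞)` satisfies
`U(R) ≤ B R^d U(2R)^{1-r}` and an a priori polynomial bound `U(R) ≤ A₀ R^{N₀}`,
then `U(R) ≤ A R^{d/r}` for some constant `A`. -/
theorem stmt4 (B r : ℝ) (d : ℕ) (hd : 1 ≤ d) (hB : 2 ≤ B) (hr0 : 0 < r) (hr1 : r < 1)
    (A₀ : ℝ) (hA₀ : 0 < A₀) (N₀ : ℕ)
    (U : ℝ → ℝ) (hU1 : ∀ R, 2 ≤ R → 1 ≤ U R)
    (hUrec : ∀ R, 2 ≤ R → U R ≤ B * R ^ (d : ℝ) * U (2 * R) ^ (1 - r))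
    (hUpoly : ∀ R, 2 ≤ R → U R ≤ A₀ * R ^ (N₀ : ℝ)) :
    ∃ A : ℝ, ∀ R, 2 ≤ R → U R ≤ A * R ^ ((d : ℝ) / r) :=
  stmt4_general B r d hB hr0 hr1 A₀ hA₀ N₀ U hU1 hUrec hUpoly
end

section
/- Fix $\widehat{\phi_0}\in C_c^\infty(\mathbb{R})$ with $0\le\widehat{\phi_0}\le 1$, $\widehat{\phi_0}(\xi)=1$ for $|\xi|<1/10$ and $\widehat{\phi_0}(\xi)=0$ for $|\xi|>1/5$; let $\phi_0$ be its inverse Fourier transform, so $|\phi_0(x)|\ge c_0>0$ for all $|x|<\rho_0$ for some $\rho_0>0$. Let $0<4\delta\le\epsilon<1/10$, set $a_j=j^{-(1/2+\delta)}$ and $\lambda_j=j^{\epsilon}$, and define $f=\sum_{j\ge 10} a_j\,\lambda_j^{1/2}\,\phi_0(\lambda_j x)\,e^{i2^j x}$. Then: (i) $\|f\|_{L^2(\mathbb{R})}<\infty$; (ii) $\sup_j |a_j|\lambda_j^{1/2}<\infty$ (so $\|f\|_{\dot B^0_{\infty,\infty}}<\infty$); (iii) $\int_{\mathbb{R}}\big(\sum_j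 |P_j f(x)|^2\big)^2 dx=\infty$, where $P_j$ is the Littlewood–Paley projection to frequencies $|\xi|\sim 2^j$. Consequently the estimate $\|\sum_j (P_j f)^2\|_{L^2}\lesssim \|f\|_{L^2}\|f\|_{\dot B^0_{\infty,\infty}}$ fails. -/
/-!
The pieces `g j` are wave packets: `φ₀` dilated by `λ_j = j^ε` and modulated to frequency `2^j`,
so their Fourier transforms live in the disjoint intervals `|ξ - 2^j| ≤ λ_j / 5`. They are
therefore pairwise orthogonal, and `‖f‖₂² = ∑ ‖g_j‖₂² = ‖φ₀‖₂² ∑ j^(-1-2δ) < ∞`.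
On the other hand `|g_j x| ≥ c₀ a_j λ_j^(1/2)` while `λ_j |x| < ρ₀`, so for small `x > 0` the
`N ≈ x^(-1/ε)` first pieces give `∑ |g_j x|² ≳ N^(ε-2δ)`, whose square is `≳ N^ε ≈ 1/x` because
`4δ ≤ ε`; and `1/x` is not integrable at `0`.
-/

open MeasureTheory
open scoped ENNReal

/-- The Fourier transform on `ℝ` in the convention `f̂(ξ) = ∫ f(x) e^{-i x ξ} dx`. -/
noncomputable def pFT1 (f : ℝ → ℂ) (ξ : ℝ) : ℂ :=
  ∫ x : ℝ, Complex.exp (-(Complex.I) * ((x * ξ : ℝ) : ℂ)) * f x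

open Complex Set Filter
open scoped FourierTransform ComplexConjugate SchwartzMap Real

lemma pFT1_eq_fourier (f : ℝ → ℂ) (ξ : ℝ) : pFT1 f ξ = 𝓕 f (ξ / (2 * π)) := by
  rw [Real.fourier_real_eq_integral_exp_smul, pFT1]
  congr 1 with x
  rw [smul_eq_mul]
  congr 2
  push_cast
  field_simp

lemma pFT1_schwartz_eq (φ : 𝓢(ℝ, ℂ)) : pFT1 φ = fun ξ => 𝓕 φ (ξ / (2 * π)) := by
  ext ξ
  rw [pFT1_eq_fourier, SchwartzMap.fourier_coe]

lemma continuous_pFT1 (φ : 𝓢(ℝ, ℂ)) : Continuous (pFT1 φ) := by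
  rw [pFT1_schwartz_eq]
  fun_prop

lemma integrable_pFT1 (φ : 𝓢(ℝ, ℂ)) : Integrable (pFT1 φ) := by
  rw [pFT1_schwartz_eq]
  exact (𝓕 φ).integrable.comp_div Real.two_pi_pos.ne'

lemma pFT1_inversion (φ : 𝓢(ℝ, ℂ)) (y : ℝ) :
    φ y = ((2 * π : ℝ)⁻¹ : ℂ) * ∫ η : ℝ, exp (I * (y * η : ℝ)) * pFT1 φ η := by
  have hinv : φ y = ∫ v : ℝ, exp (I * (y * (2 * π * v) : ℝ)) * 𝓕 φ v := by
    conv_lhs => rw [← FourierPair.fourierInv_fourier_eq (F := 𝓢(ℝ, ℂ)) φ]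
    rw [SchwartzMap.fourierInv_coe, Real.fourierInv_eq_fourier_neg,
      Real.fourier_real_eq_integral_exp_smul]
    congr 1 with v
    rw [smul_eq_mul]
    congr 2
    push_cast
    ring
  have hsub := Measure.integral_comp_div
    (fun v : ℝ => exp (I * (y * (2 * π * v) : ℝ)) * 𝓕 φ v) (2 * π)
  have hη : ∀ η : ℝ, y * (2 * π * (η / (2 * π))) = y * η := fun η => by field_simp
  simp only [hη, abs_of_pos Real.two_pi_pos] at hsub
  rw [pFT1_schwartz_eq, hsub, hinv, real_smul, ← mul_assoc,
    inv_mul_cancel₀ (ofReal_ne_zero.2 Real.two_pi_pos.ne'), one_mul]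

noncomputable def wavePacket (φ : ℝ → ℂ) (a lam ω x : ℝ) : ℂ :=
  (a : ℂ) * φ (lam * x) * exp (I * ((ω * x : ℝ) : ℂ))

lemma norm_wavePacket (φ : ℝ → ℂ) (a lam ω x : ℝ) :
    ‖wavePacket φ a lam ω x‖ = |a| * ‖φ (lam * x)‖ := by
  rw [wavePacket, norm_mul, norm_mul, norm_exp_I_mul_ofReal, mul_one, norm_real, Real.norm_eq_abs]

lemma continuous_wavePacket {φ : ℝ → ℂ} (hφ : Continuous φ) (a lam ω : ℝ) :
    Continuous (wavePacket φ a lam ω) := by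
  unfold wavePacket
  fun_prop

lemma memLp_two_wavePacket (φ : 𝓢(ℝ, ℂ)) (a : ℝ) {lam : ℝ} (hlam : lam ≠ 0) (ω : ℝ) :
    MemLp (wavePacket φ a lam ω) 2 := by
  refine (memLp_two_iff_integrable_sq_norm
    (continuous_wavePacket φ.continuous a lam ω).aestronglyMeasurable).2 ?_
  simp only [norm_wavePacket, mul_pow, sq_abs]
  exact (((memLp_two_iff_integrable_sq_norm φ.continuous.aestronglyMeasurable).1
    (φ.memLp 2)).comp_mul_left' hlam).const_mul _

lemma integral_norm_wavePacket_sq (φ : ℝ → ℂ) (a lam ω : ℝ) :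
    ∫ x, ‖wavePacket φ a lam ω x‖ ^ 2 = a ^ 2 * |lam|⁻¹ * ∫ y, ‖φ y‖ ^ 2 := by
  simp only [norm_wavePacket, mul_pow, sq_abs]
  rw [integral_const_mul, Measure.integral_comp_mul_left (fun y => ‖φ y‖ ^ 2), abs_inv,
    smul_eq_mul, mul_assoc]

lemma wavePacket_mul_exp (φ : ℝ → ℂ) (a lam ω ν x : ℝ) :
    wavePacket φ a lam ω x * exp (I * ((ν * x : ℝ) : ℂ)) = wavePacket φ a lam (ω + ν) x := by
  rw [wavePacket, wavePacket, mul_assoc, ← exp_add]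
  push_cast
  ring_nf

lemma integral_wavePacket (φ : ℝ → ℂ) (a : ℝ) {lam : ℝ} (hlam : lam ≠ 0) (ω : ℝ) :
    ∫ x, wavePacket φ a lam ω x = a * |lam|⁻¹ * pFT1 φ (-(ω / lam)) := by
  let g : ℝ → ℂ := fun y => (a : ℂ) * (exp (-I * ((y * -(ω / lam) : ℝ) : ℂ)) * φ y)
  have hscale : wavePacket φ a lam ω = fun x => g (lam * x) := by
    ext x
    rw [wavePacket, mul_assoc, mul_comm (φ _)]
    congr 3
    have : (lam : ℂ) ≠ 0 := ofReal_ne_zero.2 hlam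
    push_cast
    field_simp
  rw [hscale, Measure.integral_comp_mul_left g lam, integral_const_mul, abs_inv, real_smul]
  simp only [pFT1]
  push_cast
  ring

lemma conj_wavePacket_eq_integral (ψ : 𝓢(ℝ, ℂ)) (b mu ν x : ℝ) :
    conj (wavePacket ψ b mu ν x) = ((b / (2 * π) : ℝ) : ℂ) *
      ∫ η : ℝ, conj (pFT1 ψ η) * exp (I * ((-(ν + mu * η) * x : ℝ) : ℂ)) := by
  have hη : ∀ η : ℝ, conj (exp (I * ((mu * x * η : ℝ) : ℂ)) * pFT1 ψ η) *
      conj (exp (I * ((ν * x : ℝ) : ℂ))) =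
      conj (pFT1 ψ η) * exp (I * ((-(ν + mu * η) * x : ℝ) : ℂ)) := by
    intro η
    simp only [map_mul, ← exp_conj, conj_I, conj_ofReal]
    rw [mul_comm (exp _), mul_assoc, ← exp_add]
    push_cast
    ring_nf
  rw [wavePacket, pFT1_inversion ψ (mu * x)]
  simp only [map_mul, map_inv₀, conj_ofReal]
  rw [← integral_conj, mul_assoc, mul_assoc, ← integral_mul_const]
  simp_rw [hη]
  push_cast
  ring

/- Expanding `conj (ψ (mu * x))` by Fourier inversion and integrating in `x` first leaves
`∫ conj (ψ̂ η) * φ̂ ((ν + mu * η - ω) / lam) dη` up to constants, and `hsep` kills one factor at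
every `η`. -/
lemma integral_wavePacket_mul_conj_eq_zero (φ ψ : 𝓢(ℝ, ℂ)) {R S : ℝ}
    (hφ : ∀ ξ, R < |ξ| → pFT1 φ ξ = 0) (hψ : ∀ ξ, S < |ξ| → pFT1 ψ ξ = 0)
    (a b : ℝ) {lam mu ω ν : ℝ} (hlam : 0 < lam) (hmu : 0 < mu)
    (hsep : R * lam + S * mu < |ω - ν|) :
    ∫ x, wavePacket φ a lam ω x * conj (wavePacket ψ b mu ν x) = 0 := by
  set G : ℝ → ℝ → ℂ := fun x η => conj (pFT1 ψ η) * wavePacket φ a lam (ω - (ν + mu * η)) x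
  have hG : Integrable (Function.uncurry G) (volume.prod volume) := by
    have hcont : Continuous (Function.uncurry G) := by
      simp only [G, Function.uncurry_def, wavePacket]
      have := continuous_pFT1 ψ
      have := φ.continuous
      fun_prop
    refine (((φ.integrable.comp_mul_left' hlam.ne').norm.const_mul |a|).mul_prod
      (integrable_pFT1 ψ).norm).mono' hcont.aestronglyMeasurable (.of_forall fun p => ?_)
    simp only [G, Function.uncurry_def, norm_mul, norm_wavePacket, RCLike.norm_conj]
    exact (mul_comm _ _).le
  have hinner : ∀ η, ∫ x, G x η = 0 := by
    intro η
    rw [integral_const_mul, integral_wavePacket _ _ hlam.ne']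
    by_cases hη : S < |η|
    · rw [hψ η hη, map_zero, zero_mul]
    · refine mul_eq_zero_of_right _ (mul_eq_zero_of_right _ (hφ _ ?_))
      rw [abs_neg, abs_div, abs_of_pos hlam, lt_div_iff₀ hlam]
      have : |mu * η| ≤ S * mu := by
        rw [abs_mul, abs_of_pos hmu, mul_comm]
        exact mul_le_mul_of_nonneg_right (not_lt.1 hη) hmu.le
      calc R * lam < |ω - ν| - |mu * η| := by linarith
        _ ≤ |ω - (ν + mu * η)| := by
          rw [← sub_sub]; exact abs_sub_abs_le_abs_sub _ _
  have hpt : ∀ x, wavePacket φ a lam ω x * conj (wavePacket ψ b mu ν x) =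
      ((b / (2 * π) : ℝ) : ℂ) * ∫ η, G x η := by
    intro x
    rw [conj_wavePacket_eq_integral, mul_left_comm, ← integral_const_mul]
    congr 2 with η
    rw [mul_left_comm, wavePacket_mul_exp, ← sub_eq_add_neg]
  simp_rw [hpt, integral_const_mul, integral_integral_swap hG, hinner, integral_zero, mul_zero]

section Orthogonal

variable {α : Type*} [MeasurableSpace α] {μ : Measure α}

lemma integral_norm_sum_sq_of_pairwise_orthogonal {ι : Type*} (s : Finset ι) {u : ι → α → ℂ}
    (hu : ∀ j, MemLp (u j) 2 μ)
    (horth : Pairwise fun j k => ∫ x, u j x * conj (u k x) ∂μ = 0) :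
    ∫ x, ‖∑ j ∈ s, u j x‖ ^ 2 ∂μ = ∑ j ∈ s, ∫ x, ‖u j x‖ ^ 2 ∂μ := by
  have hprod : ∀ j k, Integrable (fun x => u j x * conj (u k x)) μ :=
    fun j k => (hu j).integrable_mul (hu k).star
  have hnormsq : ∀ z : ℂ, ((‖z‖ ^ 2 : ℝ) : ℂ) = z * conj z := fun z => by
    rw [RCLike.mul_conj]; push_cast; rfl
  apply ofReal_injective
  rw [ofReal_sum]
  simp only [← integral_complex_ofReal, hnormsq, map_sum, Finset.sum_mul_sum]
  rw [integral_finsetSum _ fun j _ => integrable_finsetSum _ fun k _ => hprod j k]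
  refine Finset.sum_congr rfl fun j hj => ?_
  rw [integral_finsetSum _ fun k _ => hprod j k]
  exact Finset.sum_eq_single_of_mem j hj fun k _ hkj => horth hkj.symm

-- No convergence is assumed: where the series diverges, `∑'` is `0`.
lemma enorm_tsum_pow_le_liminf {E : Type*} [NormedAddCommGroup E] (f : ℕ → E) (n : ℕ) :
    ‖∑' j, f j‖ₑ ^ n ≤ liminf (fun N => ‖∑ j ∈ Finset.range N, f j‖ₑ ^ n) atTop := by
  by_cases hf : Summable f
  · exact (ENNReal.Tendsto.pow hf.hasSum.tendsto_sum_nat.enorm).liminf_eq.ge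
  · rcases n with _ | n
    · simp
    · simp [tsum_eq_zero_of_not_summable hf]

theorem eLpNorm_tsum_lt_top_of_pairwise_orthogonal {u : ℕ → α → ℂ} (hu : ∀ j, MemLp (u j) 2 μ)
    (horth : Pairwise fun j k => ∫ x, u j x * conj (u k x) ∂μ = 0)
    (hsum : Summable fun j => ∫ x, ‖u j x‖ ^ 2 ∂μ) :
    eLpNorm (fun x => ∑' j, u j x) 2 μ < ⊤ := by
  have hpartial : ∀ N, ∫⁻ x, ‖∑ j ∈ Finset.range N, u j x‖ₑ ^ 2 ∂μ ≤
      ENNReal.ofReal (∑' j, ∫ x, ‖u j x‖ ^ 2 ∂μ) := by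
    intro N
    have hS : MemLp (fun x => ∑ j ∈ Finset.range N, u j x) 2 μ :=
      memLp_finsetSum _ fun j _ => hu j
    have hint := (memLp_two_iff_integrable_sq_norm hS.1).1 hS
    calc ∫⁻ x, ‖∑ j ∈ Finset.range N, u j x‖ₑ ^ 2 ∂μ
        = ENNReal.ofReal (∫ x, ‖∑ j ∈ Finset.range N, u j x‖ ^ 2 ∂μ) := by
          rw [ofReal_integral_eq_lintegral_ofReal hint (.of_forall fun _ => by positivity)]
          simp only [ENNReal.ofReal_pow (norm_nonneg _), ofReal_norm]
      _ ≤ ENNReal.ofReal (∑' j, ∫ x, ‖u j x‖ ^ 2 ∂μ) := by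
          rw [integral_norm_sum_sq_of_pairwise_orthogonal _ hu horth]
          exact ENNReal.ofReal_le_ofReal (hsum.sum_le_tsum _ fun j _ => by positivity)
  rw [eLpNorm_lt_top_iff_lintegral_rpow_enorm_lt_top two_ne_zero ENNReal.ofNat_ne_top]
  simp only [ENNReal.toReal_ofNat, ENNReal.rpow_ofNat]
  calc ∫⁻ x, ‖∑' j, u j x‖ₑ ^ 2 ∂μ
      ≤ ∫⁻ x, liminf (fun N => ‖∑ j ∈ Finset.range N, u j x‖ₑ ^ 2) atTop ∂μ :=
        lintegral_mono fun x => enorm_tsum_pow_le_liminf _ 2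
    _ ≤ liminf (fun N => ∫⁻ x, ‖∑ j ∈ Finset.range N, u j x‖ₑ ^ 2 ∂μ) atTop :=
        lintegral_liminf_le' fun N =>
          ((memLp_finsetSum _ fun j _ => hu j).1.enorm.pow_const 2)
    _ ≤ ENNReal.ofReal (∑' j, ∫ x, ‖u j x‖ ^ 2 ∂μ) :=
        liminf_le_of_frequently_le' (.of_forall hpartial)
    _ < ⊤ := ENNReal.ofReal_lt_top

end Orthogonal

noncomputable def packetAmplitude (δ ε : ℝ) (j : ℕ) : ℝ :=
  (j : ℝ) ^ (-(1 / 2 + δ)) * (j : ℝ) ^ (ε / 2)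

noncomputable def lacunaryPacket (φ : ℝ → ℂ) (δ ε : ℝ) (j : ℕ) (x : ℝ) : ℂ :=
  if 10 ≤ j then wavePacket φ (packetAmplitude δ ε j) ((j : ℝ) ^ ε) (2 ^ j) x else 0

lemma lacunaryPacket_of_le (φ : ℝ → ℂ) (δ ε : ℝ) {j : ℕ} (hj : 10 ≤ j) :
    lacunaryPacket φ δ ε j = wavePacket φ (packetAmplitude δ ε j) ((j : ℝ) ^ ε) (2 ^ j) := by
  ext x; simp [lacunaryPacket, hj]

lemma lacunaryPacket_of_lt (φ : ℝ → ℂ) (δ ε : ℝ) {j : ℕ} (hj : j < 10) :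
    lacunaryPacket φ δ ε j = 0 := by
  ext x; simp [lacunaryPacket, hj]

section Amplitude

variable {δ ε : ℝ}

lemma packetAmplitude_nonneg (j : ℕ) : 0 ≤ packetAmplitude δ ε j := by
  unfold packetAmplitude; positivity

lemma packetAmplitude_le_one (hδ : 0 ≤ δ) (hε : ε ≤ 1) (j : ℕ) : packetAmplitude δ ε j ≤ 1 := by
  rcases j.eq_zero_or_pos with rfl | hj
  · rw [packetAmplitude, Nat.cast_zero, Real.zero_rpow (by linarith), zero_mul]
    exact zero_le_one
  · rw [packetAmplitude, ← Real.rpow_add (by positivity)]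
    exact Real.rpow_le_one_of_one_le_of_nonpos (by exact_mod_cast hj) (by linarith)

lemma packetAmplitude_sq {j : ℕ} (hj : 0 < j) :
    packetAmplitude δ ε j ^ 2 = (j : ℝ) ^ (ε - (1 + 2 * δ)) := by
  have hj' : (0 : ℝ) < j := by exact_mod_cast hj
  rw [packetAmplitude, ← Real.rpow_add hj', ← Real.rpow_mul_natCast hj'.le]
  congr 1
  push_cast
  ring

end Amplitude

lemma rpow_add_rpow_lt_abs_two_pow_sub {j k : ℕ} (hjk : j ≠ k) {ε : ℝ} (hε0 : 0 ≤ ε)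
    (hε1 : ε ≤ 1) : 1 / 5 * (j : ℝ) ^ ε + 1 / 5 * (k : ℝ) ^ ε < |(2 : ℝ) ^ j - 2 ^ k| := by
  wlog hkj : k < j generalizing j k
  · rw [add_comm, abs_sub_comm]
    exact this hjk.symm (by omega)
  have hj : (1 : ℝ) ≤ j := by exact_mod_cast Nat.one_le_of_lt hkj
  have hjε : (j : ℝ) ^ ε ≤ j := Real.rpow_le_self_of_one_le hj hε1
  have hkε : (k : ℝ) ^ ε ≤ (j : ℝ) ^ ε := by gcongr
  have h2k : (2 : ℝ) ^ k ≤ 2 ^ (j - 1) := pow_le_pow_right₀ one_le_two (by omega)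
  have h2j : (2 : ℝ) ^ j = 2 * 2 ^ (j - 1) := by rw [← pow_succ']; congr 1; omega
  have hj2 : (j : ℝ) ≤ 2 ^ (j - 1) := by
    exact_mod_cast (show j ≤ 2 ^ (j - 1) by have := Nat.lt_two_pow_self (n := j - 1); omega)
  rw [abs_of_pos (by linarith)]
  linarith

section Lacunary

variable (φ : 𝓢(ℝ, ℂ)) {δ ε : ℝ}

lemma memLp_two_lacunaryPacket (j : ℕ) : MemLp (lacunaryPacket φ δ ε j) 2 := by
  rcases le_or_gt 10 j with hj | hj
  · rw [lacunaryPacket_of_le _ _ _ hj]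
    exact memLp_two_wavePacket φ _ (by positivity) _
  · rw [lacunaryPacket_of_lt _ _ _ hj]
    exact MemLp.zero'

lemma integral_norm_lacunaryPacket_sq_le (j : ℕ) :
    ∫ x, ‖lacunaryPacket φ δ ε j x‖ ^ 2 ≤ (j : ℝ) ^ (-(1 + 2 * δ)) * ∫ y, ‖φ y‖ ^ 2 := by
  rcases le_or_gt 10 j with hj | hj
  · have hj' : (0 : ℝ) < j := by exact_mod_cast (by omega : 0 < j)
    rw [lacunaryPacket_of_le _ _ _ hj, integral_norm_wavePacket_sq, packetAmplitude_sq (by omega),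
      abs_of_pos (by positivity), ← Real.rpow_neg hj'.le, ← Real.rpow_add hj',
      show ε - (1 + 2 * δ) + -ε = -(1 + 2 * δ) by ring]
  · rw [lacunaryPacket_of_lt _ _ _ hj]
    simp only [Pi.zero_apply, norm_zero, zero_pow two_ne_zero, integral_zero]
    positivity

lemma pairwise_integral_lacunaryPacket_mul_conj_eq_zero
    (h0 : ∀ ξ : ℝ, 1 / 5 < |ξ| → pFT1 φ ξ = 0) (hε0 : 0 ≤ ε) (hε1 : ε ≤ 1) :
    Pairwise fun j k =>
      ∫ x, lacunaryPacket φ δ ε j x * conj (lacunaryPacket φ δ ε k x) = 0 := by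
  intro j k hjk
  rcases le_or_gt 10 j with hj | hj
  · rcases le_or_gt 10 k with hk | hk
    · rw [lacunaryPacket_of_le _ _ _ hj, lacunaryPacket_of_le _ _ _ hk]
      exact integral_wavePacket_mul_conj_eq_zero φ φ h0 h0 _ _ (by positivity) (by positivity)
        (rpow_add_rpow_lt_abs_two_pow_sub hjk hε0 hε1)
    · simp [lacunaryPacket_of_lt _ _ _ hk]
  · simp [lacunaryPacket_of_lt _ _ _ hj]

theorem eLpNorm_tsum_lacunaryPacket_lt_top (h0 : ∀ ξ : ℝ, 1 / 5 < |ξ| → pFT1 φ ξ = 0)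
    (hδ : 0 < δ) (hε0 : 0 ≤ ε) (hε1 : ε ≤ 1) :
    eLpNorm (fun x => ∑' j, lacunaryPacket φ δ ε j x) 2 volume < ⊤ := by
  refine eLpNorm_tsum_lt_top_of_pairwise_orthogonal (memLp_two_lacunaryPacket φ)
    (pairwise_integral_lacunaryPacket_mul_conj_eq_zero φ h0 hε0 hε1) ?_
  refine .of_nonneg_of_le (fun j => by positivity) (integral_norm_lacunaryPacket_sq_le φ)
    ((Real.summable_nat_rpow.2 (by linarith)).mul_right _)

end Lacunary

lemma exists_nat_rpow_le_le_two_mul {ε : ℝ} (hε0 : 0 < ε) (hε1 : ε ≤ 1) {K : ℕ} (hK : 1 ≤ K)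
    {t : ℝ} (ht : 2 * K ≤ t) : ∃ N : ℕ, K ≤ N ∧ (N : ℝ) ^ ε ≤ t ∧ t ≤ 2 * (N : ℝ) ^ ε := by
  have hK1 : (1 : ℝ) ≤ K := by exact_mod_cast hK
  have ht1 : 1 ≤ t := by linarith
  set y := t ^ ε⁻¹
  have hyε : y ^ ε = t := Real.rpow_inv_rpow (by linarith) hε0.ne'
  have hty : t ≤ y := Real.self_le_rpow_of_one_le ht1 ((one_le_inv₀ hε0).2 hε1)
  have hy2N : y ≤ 2 * ⌊y⌋₊ := by linarith [Nat.sub_one_lt_floor y]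
  refine ⟨⌊y⌋₊, Nat.le_floor (by linarith), ?_, ?_⟩
  · rw [← hyε]
    exact Real.rpow_le_rpow (by positivity) (Nat.floor_le (by linarith)) hε0.le
  · calc t = y ^ ε := hyε.symm
      _ ≤ (2 * ⌊y⌋₊) ^ ε := Real.rpow_le_rpow (by linarith) hy2N hε0.le
      _ = 2 ^ ε * (⌊y⌋₊ : ℝ) ^ ε := Real.mul_rpow zero_le_two (by positivity)
      _ ≤ 2 * (⌊y⌋₊ : ℝ) ^ ε := by
          gcongr
          exact Real.rpow_le_self_of_one_le one_le_two hε1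

lemma rpow_div_two_le_sum_Icc_rpow_sub_one {s : ℝ} (hs : s ≤ 1) {N : ℕ} (hN : 18 ≤ N) :
    (N : ℝ) ^ s / 2 ≤ ∑ j ∈ Finset.Icc 10 N, (j : ℝ) ^ (s - 1) := by
  have hN0 : (0 : ℝ) < N := by exact_mod_cast (by omega : 0 < N)
  have hterm : ∀ j ∈ Finset.Icc 10 N, (N : ℝ) ^ (s - 1) ≤ (j : ℝ) ^ (s - 1) := by
    intro j hj
    obtain ⟨hj10, hjN⟩ := Finset.mem_Icc.1 hj
    exact Real.rpow_le_rpow_of_nonpos (by exact_mod_cast (by omega : 0 < j))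
      (by exact_mod_cast hjN) (by linarith)
  have hcard : ((Finset.Icc 10 N).card : ℝ) = N - 9 := by
    rw [Nat.card_Icc, Nat.cast_sub (by omega)]; push_cast; ring
  calc (N : ℝ) ^ s / 2 = N / 2 * (N : ℝ) ^ (s - 1) := by
        rw [Real.rpow_sub_one hN0.ne']; field_simp
    _ ≤ (Finset.Icc 10 N).card * (N : ℝ) ^ (s - 1) := by
        rw [hcard]
        gcongr
        linarith [show (18 : ℝ) ≤ N by exact_mod_cast hN]
    _ ≤ ∑ j ∈ Finset.Icc 10 N, (j : ℝ) ^ (s - 1) := by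
        rw [← nsmul_eq_mul]; exact Finset.card_nsmul_le_sum _ _ _ hterm

lemma lintegral_ofReal_inv_Ioo_zero_eq_top {r : ℝ} (hr : 0 < r) :
    ∫⁻ x in Ioo 0 r, ENNReal.ofReal x⁻¹ = ⊤ := by
  by_contra h
  have hint : IntegrableOn (fun x : ℝ => x⁻¹) (Ioo 0 r) :=
    (lintegral_ofReal_ne_top_iff_integrable measurable_inv.aestronglyMeasurable
      ((ae_restrict_iff' measurableSet_Ioo).2 (.of_forall fun x hx => inv_nonneg.2 hx.1.le))).1 h
  have := (intervalIntegrable_iff_integrableOn_Ioo_of_le hr.le).2 hint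
  simp [hr.ne, hr.le] at this

section Divergence

variable {φ : ℝ → ℂ} {ρ₀ c₀ δ ε : ℝ}

lemma mul_rpow_le_norm_lacunaryPacket_sq (hc₀ : 0 ≤ c₀) (hlow : ∀ x, |x| < ρ₀ → c₀ ≤ ‖φ x‖)
    (hδε : 4 * δ ≤ ε) {j : ℕ} (hj : 10 ≤ j) {x : ℝ} (hx : |(j : ℝ) ^ ε * x| < ρ₀) :
    c₀ ^ 2 * (j : ℝ) ^ (ε / 2 - 1) ≤ ‖lacunaryPacket φ δ ε j x‖ ^ 2 := by
  rw [lacunaryPacket_of_le _ _ _ hj, norm_wavePacket, abs_of_nonneg (packetAmplitude_nonneg j),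
    mul_pow, packetAmplitude_sq (by omega), mul_comm (c₀ ^ 2)]
  have hexp : (j : ℝ) ^ (ε / 2 - 1) ≤ (j : ℝ) ^ (ε - (1 + 2 * δ)) :=
    Real.rpow_le_rpow_of_exponent_le (by exact_mod_cast (by omega : 1 ≤ j)) (by linarith)
  exact mul_le_mul hexp (pow_le_pow_left₀ hc₀ (hlow _ hx) 2) (by positivity) (by positivity)

lemma ofReal_mul_inv_le_sq_tsum_enorm_lacunaryPacket_sq (hc₀ : 0 ≤ c₀)
    (hlow : ∀ x, |x| < ρ₀ → c₀ ≤ ‖φ x‖) (hδε : 4 * δ ≤ ε) (hε0 : 0 < ε) (hε1 : ε ≤ 1)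
    {x : ℝ} (hx : x ∈ Ioo 0 (ρ₀ / 72)) :
    ENNReal.ofReal (c₀ ^ 4 * ρ₀ / 16) * ENNReal.ofReal x⁻¹ ≤
      (∑' j, ‖lacunaryPacket φ δ ε j x‖ₑ ^ 2) ^ 2 := by
  obtain ⟨hx0, hxr⟩ := hx
  have hρ₀ : 0 < ρ₀ := by linarith
  -- With `N ^ ε ≈ ρ₀ / (2 * x)`, every packet `10 ≤ j ≤ N` evaluates `φ` inside `|y| < ρ₀`.
  obtain ⟨N, hN, hNt, htN⟩ := exists_nat_rpow_le_le_two_mul hε0 hε1 (K := 18) (by norm_num)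
    (t := ρ₀ / (2 * x)) (by rw [le_div_iff₀ (by positivity)]; push_cast; linarith)
  have hNx : (N : ℝ) ^ ε * x ≤ ρ₀ / 2 := by
    calc (N : ℝ) ^ ε * x ≤ ρ₀ / (2 * x) * x := by gcongr
      _ = ρ₀ / 2 := by field_simp
  have hsum : c₀ ^ 2 * ((N : ℝ) ^ (ε / 2) / 2) ≤
      ∑ j ∈ Finset.Icc 10 N, ‖lacunaryPacket φ δ ε j x‖ ^ 2 := by
    calc c₀ ^ 2 * ((N : ℝ) ^ (ε / 2) / 2)
        ≤ c₀ ^ 2 * ∑ j ∈ Finset.Icc 10 N, (j : ℝ) ^ (ε / 2 - 1) := by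
          gcongr; exact rpow_div_two_le_sum_Icc_rpow_sub_one (by linarith) hN
      _ = ∑ j ∈ Finset.Icc 10 N, c₀ ^ 2 * (j : ℝ) ^ (ε / 2 - 1) := Finset.mul_sum _ _ _
      _ ≤ ∑ j ∈ Finset.Icc 10 N, ‖lacunaryPacket φ δ ε j x‖ ^ 2 := by
          refine Finset.sum_le_sum fun j hj => ?_
          obtain ⟨hj10, hjN⟩ := Finset.mem_Icc.1 hj
          refine mul_rpow_le_norm_lacunaryPacket_sq hc₀ hlow hδε hj10 ?_
          have : (j : ℝ) ^ ε ≤ (N : ℝ) ^ ε := by gcongr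
          rw [abs_of_nonneg (by positivity)]
          nlinarith
  have hNsq : ((N : ℝ) ^ (ε / 2)) ^ 2 = (N : ℝ) ^ ε := by
    rw [← Real.rpow_mul_natCast (by positivity)]; norm_num
  calc ENNReal.ofReal (c₀ ^ 4 * ρ₀ / 16) * ENNReal.ofReal x⁻¹
      = ENNReal.ofReal (c₀ ^ 4 / 8 * (ρ₀ / (2 * x))) := by
        rw [← ENNReal.ofReal_mul (by positivity)]; congr 1; field_simp; ring
    _ ≤ ENNReal.ofReal ((c₀ ^ 2 * ((N : ℝ) ^ (ε / 2) / 2)) ^ 2) := by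
        gcongr; rw [mul_pow, div_pow, hNsq]; nlinarith
    _ ≤ ENNReal.ofReal ((∑ j ∈ Finset.Icc 10 N, ‖lacunaryPacket φ δ ε j x‖ ^ 2) ^ 2) := by
        gcongr
    _ = (∑ j ∈ Finset.Icc 10 N, ‖lacunaryPacket φ δ ε j x‖ₑ ^ 2) ^ 2 := by
        rw [ENNReal.ofReal_pow (by positivity),
          ENNReal.ofReal_sum_of_nonneg fun j _ => by positivity]
        simp only [ENNReal.ofReal_pow (norm_nonneg _), ofReal_norm]
    _ ≤ (∑' j, ‖lacunaryPacket φ δ ε j x‖ₑ ^ 2) ^ 2 := by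
        gcongr; exact ENNReal.sum_le_tsum _

theorem lintegral_sq_tsum_enorm_lacunaryPacket_sq_eq_top (hρ₀ : 0 < ρ₀) (hc₀ : 0 < c₀)
    (hlow : ∀ x, |x| < ρ₀ → c₀ ≤ ‖φ x‖) (hδε : 4 * δ ≤ ε) (hε0 : 0 < ε) (hε1 : ε ≤ 1) :
    ∫⁻ x, (∑' j, ‖lacunaryPacket φ δ ε j x‖ₑ ^ 2) ^ 2 = ⊤ := by
  rw [eq_top_iff]
  calc ⊤ = ENNReal.ofReal (c₀ ^ 4 * ρ₀ / 16) * ∫⁻ x in Ioo 0 (ρ₀ / 72), ENNReal.ofReal x⁻¹ := by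
        rw [lintegral_ofReal_inv_Ioo_zero_eq_top (by positivity), ENNReal.mul_top]
        exact (ENNReal.ofReal_pos.2 (by positivity)).ne'
    _ = ∫⁻ x in Ioo 0 (ρ₀ / 72), ENNReal.ofReal (c₀ ^ 4 * ρ₀ / 16) * ENNReal.ofReal x⁻¹ :=
        (lintegral_const_mul' _ _ ENNReal.ofReal_ne_top).symm
    _ ≤ ∫⁻ x in Ioo 0 (ρ₀ / 72), (∑' j, ‖lacunaryPacket φ δ ε j x‖ₑ ^ 2) ^ 2 :=
        setLIntegral_mono' measurableSet_Ioo fun x hx =>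
          ofReal_mul_inv_le_sq_tsum_enorm_lacunaryPacket_sq hc₀.le hlow hδε hε0 hε1 hx
    _ ≤ ∫⁻ x, (∑' j, ‖lacunaryPacket φ δ ε j x‖ₑ ^ 2) ^ 2 := setLIntegral_le_lintegral _ _

end Divergence

theorem stmt6_general (φ₀ : SchwartzMap ℝ ℂ)
    (h0 : ∀ ξ : ℝ, 1 / 5 < |ξ| → pFT1 (⇑φ₀) ξ = 0)
    (ρ₀ c₀ : ℝ) (hρ₀ : 0 < ρ₀) (hc₀ : 0 < c₀)
    (hlow : ∀ x : ℝ, |x| < ρ₀ → c₀ ≤ ‖φ₀ x‖)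
    (δ ε : ℝ) (hδ : 0 < δ) (hδε : 4 * δ ≤ ε) (hε : ε < 1 / 10)
    (g : ℕ → ℝ → ℂ)
    (hg : ∀ (j : ℕ) (x : ℝ), g j x = if 10 ≤ j then
        (((j : ℝ) ^ (-(1 / 2 + δ)) * (j : ℝ) ^ (ε / 2) : ℝ) : ℂ) *
          φ₀ ((j : ℝ) ^ ε * x) *
          Complex.exp (Complex.I * (((2 : ℝ) ^ j * x : ℝ) : ℂ))
      else 0) :
    eLpNorm (fun x : ℝ => ∑' j : ℕ, g j x) 2 volume < ⊤ ∧
    BddAbove (Set.range fun j : ℕ => (j : ℝ) ^ (-(1 / 2 + δ)) * (j : ℝ) ^ (ε / 2)) ∧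
    ∫⁻ x : ℝ, (∑' j : ℕ, (‖g j x‖₊ : ℝ≥0∞) ^ 2) ^ 2 ∂volume = ⊤ := by
  have hε0 : 0 < ε := by linarith
  obtain rfl : g = lacunaryPacket φ₀ δ ε := funext fun j => funext (hg j)
  refine ⟨eLpNorm_tsum_lacunaryPacket_lt_top φ₀ h0 hδ hε0.le (by linarith), ⟨1, ?_⟩,
    lintegral_sq_tsum_enorm_lacunaryPacket_sq_eq_top hρ₀ hc₀ hlow hδε hε0 (by linarith)⟩
  rintro _ ⟨j, rfl⟩
  exact packetAmplitude_le_one hδ.le (by linarith) j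

/-- With `φ₀` having `𝓕φ₀ ∈ C_c^∞`, `0 ≤ 𝓕φ₀ ≤ 1`, `𝓕φ₀ = 1` on
`{|ξ| < 1/10}`, `𝓕φ₀ = 0` on `{|ξ| > 1/5}`, `|φ₀| ≥ c₀ > 0` on `{|x| < ρ₀}`, and
`a_j = j^{-(1/2+δ)}`, `λ_j = j^ε`, `0 < 4δ ≤ ε < 1/10`, the function
`f = ∑_{j ≥ 10} a_j λ_j^{1/2} φ₀(λ_j x) e^{i 2^j x}` (with `j`-th Littlewood–Paley
piece `P_j f = g_j`, the `j`-th summand) satisfies: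
(i) `‖f‖_{L²} < ∞`; (ii) `sup_j |a_j| λ_j^{1/2} < ∞` (so `‖f‖_{Ḃ⁰_{∞,∞}} < ∞`);
(iii) `∫ (∑_j |g_j(x)|²)² dx = ∞`. Hence `‖∑_j (P_jf)²‖_{L²} ≲ ‖f‖_{L²} ‖f‖_{Ḃ⁰_{∞,∞}}`
fails. -/
theorem stmt6 (φ₀ : SchwartzMap ℝ ℂ)
    (hval : ∀ ξ : ℝ, (pFT1 (⇑φ₀) ξ).im = 0 ∧ 0 ≤ (pFT1 (⇑φ₀) ξ).re ∧ (pFT1 (⇑φ₀) ξ).re ≤ 1)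
    (h1 : ∀ ξ : ℝ, |ξ| < 1 / 10 → pFT1 (⇑φ₀) ξ = 1)
    (h0 : ∀ ξ : ℝ, 1 / 5 < |ξ| → pFT1 (⇑φ₀) ξ = 0)
    (ρ₀ c₀ : ℝ) (hρ₀ : 0 < ρ₀) (hc₀ : 0 < c₀)
    (hlow : ∀ x : ℝ, |x| < ρ₀ → c₀ ≤ ‖φ₀ x‖)
    (δ ε : ℝ) (hδ : 0 < δ) (hδε : 4 * δ ≤ ε) (hε : ε < 1 / 10)
    (g : ℕ → ℝ → ℂ)
    (hg : ∀ (j : ℕ) (x : ℝ), g j x = if 10 ≤ j then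
        (((j : ℝ) ^ (-(1 / 2 + δ)) * (j : ℝ) ^ (ε / 2) : ℝ) : ℂ) *
          φ₀ ((j : ℝ) ^ ε * x) *
          Complex.exp (Complex.I * (((2 : ℝ) ^ j * x : ℝ) : ℂ))
      else 0) :
    eLpNorm (fun x : ℝ => ∑' j : ℕ, g j x) 2 volume < ⊤ ∧
    BddAbove (Set.range fun j : ℕ => (j : ℝ) ^ (-(1 / 2 + δ)) * (j : ℝ) ^ (ε / 2)) ∧
    ∫⁻ x : ℝ, (∑' j : ℕ, (‖g j x‖₊ : ℝ≥0∞) ^ 2) ^ 2 ∂volume = ⊤ :=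
  stmt6_general φ₀ h0 ρ₀ c₀ hρ₀ hc₀ hlow δ ε hδ hδε hε g hg
end
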